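/- arXiv:1306.2653 — 5 statements merged into one kernel-verified Lean document; each statement's English description precedes it below -/
import Mathlib

section
/- The function T(u,v,A) = 100√(uv) − uv/(A+1) is concave on the domain G = {(u,v,A) : u ≥ 0, v ≥ 0, 0 ≤ A ≤ 1, uv ≤ 2}. -/
/-!
Along the line `s ↦ (u + s du, v + s dv, A + s dA)` the second derivative of `T` at `s = 0` is,
with `r = √(uv)` and `q = A + 1`,
`-25 (v du - u dv)² / r³ - 2 X Y / q³`, where `X = q du - u dA` and `Y = q dv - v dA`.
Since `vX - uY = q (v du - u dv)` and `(vX - uY)² + 4uv XY = (vX + uY)²`, its negative is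
`((25q - r/2) (vX - uY)² + (r/2) (vX + uY)²) / (q³ r³)`, a sum of squares because
`r < √2 < 50 ≤ 50q`.
-/

open Filter Topology

def HasSecondDerivAt (f f' : ℝ → ℝ) (f'' x : ℝ) : Prop :=
  (∀ᶠ s in 𝓝 x, HasDerivAt f (f' s) s) ∧ HasDerivAt f' f'' x

namespace HasSecondDerivAt

variable {f g f' g' : ℝ → ℝ} {f'' g'' x : ℝ}

theorem deriv_deriv (hf : HasSecondDerivAt f f' f'' x) : deriv (deriv f) x = f'' := by
  rw [EventuallyEq.deriv_eq (hf.1.mono fun _ hs => hs.deriv), hf.2.deriv]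

theorem _root_.hasSecondDerivAt_affine (a b x : ℝ) : HasSecondDerivAt (fun s => a + s * b) (fun _ => b) 0 x :=
  ⟨.of_forall fun s => by simpa using ((hasDerivAt_id s).mul_const b).const_add a,
    hasDerivAt_const x b⟩

theorem const_mul (c : ℝ) (hf : HasSecondDerivAt f f' f'' x) :
    HasSecondDerivAt (fun s => c * f s) (fun s => c * f' s) (c * f'') x :=
  ⟨hf.1.mono fun _ hs => hs.const_mul c, hf.2.const_mul c⟩

theorem sub (hf : HasSecondDerivAt f f' f'' x) (hg : HasSecondDerivAt g g' g'' x) :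
    HasSecondDerivAt (fun s => f s - g s) (fun s => f' s - g' s) (f'' - g'') x :=
  ⟨(hf.1.and hg.1).mono fun _ hs => hs.1.sub hs.2, hf.2.sub hg.2⟩

theorem add_const (c : ℝ) (hf : HasSecondDerivAt f f' f'' x) :
    HasSecondDerivAt (fun s => f s + c) f' f'' x :=
  ⟨hf.1.mono fun _ hs => hs.add_const c, hf.2⟩

theorem mul (hf : HasSecondDerivAt f f' f'' x) (hg : HasSecondDerivAt g g' g'' x) :
    HasSecondDerivAt (fun s => f s * g s) (fun s => f' s * g s + f s * g' s)
      (f'' * g x + 2 * (f' x * g' x) + f x * g'') x := by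
  refine ⟨(hf.1.and hg.1).mono fun _ hs => hs.1.mul hs.2, ?_⟩
  have hfx := hf.1.self_of_nhds
  have hgx := hg.1.self_of_nhds
  exact ((hf.2.mul hgx).add (hfx.mul hg.2)).congr_deriv (by ring)

theorem sqrt (hf : HasSecondDerivAt f f' f'' x) (hx : 0 < f x) :
    HasSecondDerivAt (fun s => √(f s)) (fun s => f' s / (2 * √(f s)))
      (f'' / (2 * √(f x)) - f' x ^ 2 / (4 * √(f x) ^ 3)) x := by
  have hpos : ∀ᶠ s in 𝓝 x, 0 < f s :=
    hf.1.self_of_nhds.continuousAt.eventually (eventually_gt_nhds hx)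
  refine ⟨(hf.1.and hpos).mono fun _ hs => hs.1.sqrt hs.2.ne', ?_⟩
  have hr : 0 < √(f x) := Real.sqrt_pos.2 hx
  have hsqrt := hf.1.self_of_nhds.sqrt hx.ne'
  refine (hf.2.div (hsqrt.const_mul 2) (by positivity)).congr_deriv ?_
  field_simp
  rw [Real.sq_sqrt hx.le]
  ring

theorem div (hf : HasSecondDerivAt f f' f'' x) (hg : HasSecondDerivAt g g' g'' x) (hx : g x ≠ 0) :
    HasSecondDerivAt (fun s => f s / g s) (fun s => (f' s * g s - f s * g' s) / g s ^ 2)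
      (f'' / g x - 2 * f' x * g' x / g x ^ 2 + 2 * f x * g' x ^ 2 / g x ^ 3
        - f x * g'' / g x ^ 2) x := by
  have hne : ∀ᶠ s in 𝓝 x, g s ≠ 0 :=
    hg.1.self_of_nhds.continuousAt.eventually_ne hx
  refine ⟨(hf.1.and (hg.1.and hne)).mono fun _ hs => hs.1.div hs.2.1 hs.2.2, ?_⟩
  have hfx := hf.1.self_of_nhds
  have hgx := hg.1.self_of_nhds
  refine (((hf.2.mul hgx).sub (hfx.mul hg.2)).div (hgx.pow 2) (pow_ne_zero 2 hx)).congr_deriv ?_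
  simp only [Pi.pow_apply, Pi.sub_apply, Pi.mul_apply]
  field_simp
  ring

end HasSecondDerivAt

theorem second_variation_eq {u v q r du dv dA : ℝ} (hq : q ≠ 0) (hr : r ≠ 0) (hr2 : r ^ 2 = u * v) :
    100 * (2 * (du * dv) / (2 * r) - (du * v + u * dv) ^ 2 / (4 * r ^ 3))
      - (2 * (du * dv) / q - 2 * (du * v + u * dv) * dA / q ^ 2 + 2 * (u * v) * dA ^ 2 / q ^ 3)
    = -(((25 * q - r / 2) * (v * (q * du - u * dA) - u * (q * dv - v * dA)) ^ 2
        + r / 2 * (v * (q * du - u * dA) + u * (q * dv - v * dA)) ^ 2) / (q ^ 3 * r ^ 3)) := by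
  field_simp
  linear_combination (du * dv * (800 * q ^ 3 - 16 * r * q ^ 2) + 16 * r * q * dA * (v * du + u * dv)
    - 16 * r * u * v * dA ^ 2) * hr2

theorem second_variation_nonpos {u v q r du dv dA : ℝ} (hq : 0 < q) (hr : 0 < r) (hrq : r ≤ 50 * q)
    (hr2 : r ^ 2 = u * v) :
    100 * (2 * (du * dv) / (2 * r) - (du * v + u * dv) ^ 2 / (4 * r ^ 3))
      - (2 * (du * dv) / q - 2 * (du * v + u * dv) * dA / q ^ 2 + 2 * (u * v) * dA ^ 2 / q ^ 3)
    ≤ 0 := by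
  rw [second_variation_eq hq.ne' hr.ne' hr2, neg_nonpos]
  have : 0 ≤ 25 * q - r / 2 := by linarith
  positivity

/-- `T(u,v,A) = 100√(uv) − uv/(A+1)` is concave on
`G = {u ≥ 0, v ≥ 0, 0 ≤ A ≤ 1, uv ≤ 2}`, in the Hessian sense at interior
points: at each interior point of `G` the second derivative of `T` along
any line is nonpositive. -/
theorem stmt_2 (T : ℝ → ℝ → ℝ → ℝ)
    (hT : ∀ u v A, T u v A = 100 * Real.sqrt (u * v) - u * v / (A + 1)) :
    ∀ u v A : ℝ, 0 < u → 0 < v → 0 < A → A < 1 → u * v < 2 →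
      ∀ du dv dA : ℝ,
        deriv (deriv (fun s : ℝ => T (u + s * du) (v + s * dv) (A + s * dA))) 0 ≤ 0 := by
  intro u v A hu hv hA _ huv du dv dA
  have hP := (hasSecondDerivAt_affine u du 0).mul (hasSecondDerivAt_affine v dv 0)
  have hQ := (hasSecondDerivAt_affine A dA 0).add_const 1
  have h := ((hP.sqrt (by simpa using mul_pos hu hv)).const_mul 100).sub
    (hP.div hQ (by rw [zero_mul, add_zero]; positivity))
  simp only [hT]
  rw [h.deriv_deriv]
  simp only [zero_mul, mul_zero, add_zero, zero_add, zero_div, sub_zero]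
  have hr : 0 < √(u * v) := Real.sqrt_pos.2 (mul_pos hu hv)
  have hr_lt : √(u * v) < 2 := by
    rw [Real.sqrt_lt' two_pos]
    linarith
  exact second_variation_nonpos (by linarith) hr (by linarith) (Real.sq_sqrt (mul_pos hu hv).le)
end

section
/- Let κ > 0 and a(t) = t·(log t)^{−κ} for t ≥ 2. Then a is weakly concave on [2,∞): there exists a constant C = C(κ) > 0 such that for all n, all x₁,…,xₙ ∈ [2,∞) and λ₁,…,λₙ ∈ [0,1] with Σλⱼ = 1, a(Σλⱼxⱼ) ≥ C Σλⱼ a(xⱼ). -/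
/-!
Split the points at `√m`, where `m = Σ λⱼ xⱼ`. A point `x ≤ √m` contributes at most
`√m / (log 2)^κ`; a point `x ≥ √m` has `log x ≥ (log m) / 2`, so `a(x) ≤ 2^κ x / (log m)^κ`,
and these terms average to at most `2^κ a(m)`. Finally `√m` is itself `O(a(m))`, since
`log m ≤ 2κ m^{1/(2κ)}`.
-/

open Real Finset

lemma div_log_rpow_le_of_le_sqrt {κ x m : ℝ} (hκ : 0 ≤ κ) (hx : 2 ≤ x) (hxm : x ≤ √m) :
    x / log x ^ κ ≤ √m / log 2 ^ κ := by
  have hlog2 : 0 < log 2 := log_pos one_lt_two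
  calc x / log x ^ κ ≤ x / log 2 ^ κ := by gcongr
    _ ≤ √m / log 2 ^ κ := by gcongr

lemma div_log_rpow_le_of_sqrt_le {κ x m : ℝ} (hκ : 0 ≤ κ) (hm : 1 < m) (hxm : √m ≤ x) :
    x / log x ^ κ ≤ 2 ^ κ / log m ^ κ * x := by
  have hlogm : 0 < log m := log_pos hm
  have hsqrt : 0 < √m := sqrt_pos.2 (by linarith)
  have hlogx : log m / 2 ≤ log x := by
    rw [← log_sqrt (by linarith)]
    exact log_le_log hsqrt hxm
  calc x / log x ^ κ ≤ x / (log m / 2) ^ κ := by gcongr; linarith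
    _ = 2 ^ κ / log m ^ κ * x := by
      rw [div_rpow hlogm.le zero_le_two]
      field_simp

lemma div_log_rpow_le_affine {κ x m : ℝ} (hκ : 0 ≤ κ) (hx : 2 ≤ x) (hm : 1 < m) :
    x / log x ^ κ ≤ 2 ^ κ / log m ^ κ * x + √m / log 2 ^ κ := by
  have hlogm : 0 < log m := log_pos hm
  have hlog2 : 0 < log 2 := log_pos one_lt_two
  rcases le_total x √m with hsmall | hlarge
  · have : 0 ≤ 2 ^ κ / log m ^ κ * x := by positivity
    linarith [div_log_rpow_le_of_le_sqrt hκ hx hsmall]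
  · have : 0 ≤ √m / log 2 ^ κ := by positivity
    linarith [div_log_rpow_le_of_sqrt_le hκ hm hlarge]

lemma sqrt_le_rpow_mul_div_log_rpow {κ m : ℝ} (hκ : 0 < κ) (hm : 1 < m) :
    √m ≤ (2 * κ) ^ κ * (m / log m ^ κ) := by
  have hm0 : 0 < m := by linarith
  have hlogm : 0 < log m := log_pos hm
  have hlog : log m ≤ 2 * κ * m ^ (1 / (2 * κ)) := by
    calc log m ≤ m ^ (1 / (2 * κ)) / (1 / (2 * κ)) := log_le_rpow_div hm0.le (by positivity)
      _ = 2 * κ * m ^ (1 / (2 * κ)) := by field_simp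
  have hlog_rpow : log m ^ κ ≤ (2 * κ) ^ κ * √m := by
    calc log m ^ κ ≤ (2 * κ * m ^ (1 / (2 * κ))) ^ κ := by gcongr
      _ = (2 * κ) ^ κ * √m := by
        rw [mul_rpow (by positivity) (by positivity), ← rpow_mul hm0.le, sqrt_eq_rpow]
        congr 2
        field_simp
  rw [← mul_div_assoc, le_div_iff₀ (by positivity)]
  calc √m * log m ^ κ ≤ √m * ((2 * κ) ^ κ * √m) := by gcongr
    _ = (2 * κ) ^ κ * m := by rw [mul_left_comm, mul_self_sqrt hm0.le]

lemma sum_mul_le_of_le_affine {ι : Type*} {s : Finset ι} {l x f : ι → ℝ} {A B : ℝ}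
    (hl : ∀ j ∈ s, 0 ≤ l j) (hsum : ∑ j ∈ s, l j = 1) (hf : ∀ j ∈ s, f j ≤ A * x j + B) :
    ∑ j ∈ s, l j * f j ≤ A * ∑ j ∈ s, l j * x j + B := by
  calc ∑ j ∈ s, l j * f j ≤ ∑ j ∈ s, l j * (A * x j + B) :=
        sum_le_sum fun j hj => mul_le_mul_of_nonneg_left (hf j hj) (hl j hj)
    _ = A * ∑ j ∈ s, l j * x j + B := by
      simp only [mul_add, sum_add_distrib, ← sum_mul, hsum, one_mul, mul_sum, mul_left_comm]

/-- for `κ > 0`, the function `a(t) = t (log t)^{−κ}` is weakly concave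
on `[2,∞)`: there is a constant `C = C(κ) > 0` such that for all finite convex
combinations of points of `[2,∞)`, `a(Σ λⱼ xⱼ) ≥ C Σ λⱼ a(xⱼ)`. -/
theorem stmt_7 (κ : ℝ) (hκ : 0 < κ) :
    ∃ C : ℝ, 0 < C ∧
      ∀ (n : ℕ) (x : Fin n → ℝ) (l : Fin n → ℝ),
        (∀ j, 2 ≤ x j) → (∀ j, 0 ≤ l j ∧ l j ≤ 1) → (∑ j, l j) = 1 →
        C * ∑ j, l j * (x j / Real.log (x j) ^ κ)
          ≤ (∑ j, l j * x j) / Real.log (∑ j, l j * x j) ^ κ := by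
  have hlog2 : 0 < log 2 := log_pos one_lt_two
  set K : ℝ := 2 ^ κ + (2 * κ) ^ κ / log 2 ^ κ
  refine ⟨K⁻¹, by positivity, fun n x l hx hl hsum => ?_⟩
  set m := ∑ j, l j * x j
  have hm : 2 ≤ m :=
    calc (2 : ℝ) = ∑ j, l j * 2 := by rw [← sum_mul, hsum, one_mul]
      _ ≤ m := sum_le_sum fun j _ => mul_le_mul_of_nonneg_left (hx j) (hl j).1
  have hlogm : 0 < log m := log_pos (by linarith)
  have hsum_le : ∑ j, l j * (x j / log (x j) ^ κ) ≤ 2 ^ κ / log m ^ κ * m + √m / log 2 ^ κ :=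
    sum_mul_le_of_le_affine (fun j _ => (hl j).1) hsum
      fun j _ => div_log_rpow_le_affine hκ.le (hx j) (by linarith)
  have hsqrt := sqrt_le_rpow_mul_div_log_rpow hκ (by linarith : 1 < m)
  rw [inv_mul_le_iff₀ (by positivity)]
  calc ∑ j, l j * (x j / log (x j) ^ κ) ≤ 2 ^ κ / log m ^ κ * m + √m / log 2 ^ κ := hsum_le
    _ ≤ 2 ^ κ / log m ^ κ * m + (2 * κ) ^ κ * (m / log m ^ κ) / log 2 ^ κ := by gcongr
    _ = K * (m / log m ^ κ) := by ring
end

section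
/- Let φ : (0,δ] → (0,∞) be strictly increasing, continuous with φ(x) = x/ε(1/x) where ε : [1/δ,∞) → (0,∞) is decreasing and ∫_{1/δ}^∞ ε(t)/t dt < ∞. Then ∫₁^∞ φ^{−1}(1/x) dx < ∞. -/
open Set MeasureTheory

/-! By the layer-cake formula, `∫₁^∞ ψ(1/x) dx = ∫₀^δ |{x ≥ 1 : ψ(1/x) > t}| dt`. As `φ` is
increasing, `ψ(1/x) > t` forces `x < 1/φ(t) = ε(1/t)/t`, and the substitution `s = 1/t` turns
`∫₀^δ ε(1/t)/t dt` into `∫_{1/δ}^∞ ε(s)/s ds < ∞`. -/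

theorem integrable_of_meas_lt_le_ofReal {α : Type*} [MeasurableSpace α] {μ : Measure α}
    {f : α → ℝ} (hf_nonneg : 0 ≤ᵐ[μ] f) (hf : AEMeasurable f μ) {g : ℝ → ℝ}
    (hg : IntegrableOn g (Ioi 0))
    (hfg : ∀ t ∈ Ioi (0 : ℝ), μ {x | t < f x} ≤ ENNReal.ofReal (g t)) :
    Integrable f μ := by
  refine ⟨hf.aestronglyMeasurable, ?_⟩
  rw [hasFiniteIntegral_iff_ofReal hf_nonneg, lintegral_eq_lintegral_meas_lt μ hf_nonneg hf]
  calc ∫⁻ t in Ioi 0, μ {x | t < f x} ≤ ∫⁻ t in Ioi 0, ENNReal.ofReal (g t) :=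
        setLIntegral_mono' measurableSet_Ioi hfg
    _ < ⊤ := hg.lintegral_lt_top

theorem integrableOn_Ioo_comp_inv_div {g : ℝ → ℝ} {a : ℝ} (ha : 0 < a)
    (hg : IntegrableOn (fun t => g t / t) (Ioi a)) :
    IntegrableOn (fun t => g t⁻¹ / t) (Ioo 0 a⁻¹) := by
  have hpos : ∀ x ∈ Ioi a, 0 < x := fun x hx => ha.trans hx
  rw [← inv_Ioi₀ ha, ← image_inv_eq_inv,
    integrableOn_image_iff_integrableOn_abs_deriv_smul measurableSet_Ioi
      (fun x hx => (hasDerivAt_inv (hpos x hx).ne').hasDerivWithinAt) inv_injective.injOn]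
  refine hg.congr_fun (fun x hx => ?_) measurableSet_Ioi
  have hx := hpos x hx
  rw [smul_eq_mul, abs_neg, abs_inv, abs_of_pos (by positivity), inv_inv]
  field_simp

theorem StrictMonoOn.monotoneOn_of_rightInvOn {α β : Type*} [LinearOrder α] [Preorder β]
    {φ : α → β} {ψ : β → α} {s : Set α} {t : Set β}
    (hφ : StrictMonoOn φ s) (hψ : MapsTo ψ t s) (hψφ : RightInvOn ψ φ t) : MonotoneOn ψ t := by
  intro y₁ h₁ y₂ h₂ h
  rwa [← hφ.le_iff_le (hψ h₁) (hψ h₂), hψφ h₁, hψφ h₂]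

theorem mapsTo_one_div_Ici_one_Ioc {c : ℝ} (hc : 1 ≤ c) :
    MapsTo (fun x : ℝ => 1 / x) (Ici 1) (Ioc 0 c) := fun x hx =>
  have hx₀ : 0 < x := one_pos.trans_le hx
  ⟨one_div_pos.2 hx₀, ((div_le_one₀ hx₀).2 hx).trans hc⟩

theorem volume_setOf_lt_comp_one_div_le {φ ψ : ℝ → ℝ} {δ c : ℝ} (hc : 1 ≤ c)
    (hφ : StrictMonoOn φ (Ioc 0 δ)) (hφ_pos : ∀ x ∈ Ioc 0 δ, 0 < φ x)
    (hψ : MapsTo ψ (Ioc 0 c) (Ioc 0 δ)) (hψφ : RightInvOn ψ φ (Ioc 0 c)) {t : ℝ} (ht : 0 < t) :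
    volume.restrict (Ici 1) {x | t < ψ (1 / x)}
      ≤ ENNReal.ofReal ((Ioc 0 δ).indicator (fun t => 1 / φ t) t) := by
  have hinv : ∀ ⦃x : ℝ⦄, x ∈ Ici 1 → 1 / x ∈ Ioc 0 c := mapsTo_one_div_Ici_one_Ioc hc
  rw [Measure.restrict_apply' measurableSet_Ici]
  by_cases htδ : t ≤ δ
  · have htI : t ∈ Ioc 0 δ := ⟨ht, htδ⟩
    rw [indicator_of_mem htI, ← sub_zero (1 / φ t), ← Real.volume_Ioo]
    refine measure_mono fun x ⟨hxt, hx⟩ => ⟨one_pos.trans_le hx, ?_⟩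
    have hφx : φ t < 1 / x := hψφ (hinv hx) ▸ hφ htI (hψ (hinv hx)) hxt
    rwa [lt_one_div (one_pos.trans_le hx) (hφ_pos t htI)]
  · have hempty : {x : ℝ | t < ψ (1 / x)} ∩ Ici 1 = ∅ :=
      eq_empty_of_forall_notMem fun x ⟨hxt, hx⟩ =>
        htδ (hxt.trans_le (hψ (hinv hx)).2).le
    rw [hempty, measure_empty]
    exact zero_le

theorem stmt_9_general (δ c : ℝ) (hδ : 0 < δ) (hc : 1 ≤ c)
    (ε : ℝ → ℝ)
    (hε_int : MeasureTheory.IntegrableOn (fun t => ε t / t) (Ici (1 / δ)))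
    (φ : ℝ → ℝ)
    (hφ_def : ∀ x ∈ Ioc 0 δ, φ x = x / ε (1 / x))
    (hφ_mono : StrictMonoOn φ (Ioc 0 δ))
    (hφ_surj : φ '' (Ioc 0 δ) = Ioc 0 c)
    (ψ : ℝ → ℝ)
    (hψ : ∀ x ∈ Ioc 0 δ, ψ (φ x) = x)
    (hψ' : ∀ y ∈ Ioc 0 c, φ (ψ y) = y) :
    MeasureTheory.IntegrableOn (fun x : ℝ => ψ (1 / x)) (Ici (1 : ℝ)) := by
  have hψ_maps : MapsTo ψ (Ioc 0 c) (Ioc 0 δ) := by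
    rw [← hφ_surj]
    rintro _ ⟨x, hx, rfl⟩
    rwa [hψ x hx]
  have hφ_pos : ∀ x ∈ Ioc 0 δ, 0 < φ x := fun x hx => (hφ_surj ▸ mem_image_of_mem φ hx).1
  have hinv : ∀ ⦃x : ℝ⦄, x ∈ Ici 1 → 1 / x ∈ Ioc 0 c := mapsTo_one_div_Ici_one_Ioc hc
  have hψ_mono := hφ_mono.monotoneOn_of_rightInvOn hψ_maps hψ'
  have hf_anti : AntitoneOn (fun x : ℝ => ψ (1 / x)) (Ici 1) := fun x hx y hy hxy =>
    hψ_mono (hinv hy) (hinv hx) (one_div_le_one_div_of_le (one_pos.trans_le hx) hxy)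
  have hf_nonneg : 0 ≤ᵐ[volume.restrict (Ici 1)] fun x : ℝ => ψ (1 / x) :=
    (ae_restrict_iff' measurableSet_Ici).2 (.of_forall fun x hx => (hψ_maps (hinv hx)).1.le)
  have hg : IntegrableOn (fun t => 1 / φ t) (Ioc 0 δ) := by
    have h := integrableOn_Ioo_comp_inv_div (one_div_pos.2 hδ)
      (hε_int.mono_set Ioi_subset_Ici_self)
    rw [one_div, inv_inv] at h
    rw [integrableOn_Ioc_iff_integrableOn_Ioo]
    refine h.congr_fun (fun t ht => ?_) measurableSet_Ioo
    rw [hφ_def t (Ioo_subset_Ioc_self ht), one_div_div, one_div]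
  exact integrable_of_meas_lt_le_ofReal hf_nonneg
    (aemeasurable_restrict_of_antitoneOn measurableSet_Ici hf_anti)
    ((integrable_indicator_iff measurableSet_Ioc).2 hg).integrableOn
    (fun t ht => volume_setOf_lt_comp_one_div_le hc hφ_mono hφ_pos hψ_maps hψ' ht)

/-- let `φ : (0,δ] → (0,∞)` be strictly increasing and continuous,
`φ(x) = x/ε(1/x)` with `ε : [1/δ,∞) → (0,∞)` decreasing, `C¹`, and
`∫_{1/δ}^∞ ε(t)/t dt < ∞`; `φ` is a bijection from `(0,δ]` onto `(0,c]` with `c ≥ 1`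
(`φ(0+)=0`) and `ψ` is its inverse.  Then `∫₁^∞ φ⁻¹(1/x) dx < ∞`. -/
theorem stmt_9 (δ c : ℝ) (hδ : 0 < δ) (hc : 1 ≤ c)
    (ε : ℝ → ℝ) (hε_pos : ∀ t, 1 / δ ≤ t → 0 < ε t)
    (hε_dec : AntitoneOn ε (Ici (1 / δ)))
    (hε_C1 : ContDiffOn ℝ 1 ε (Ici (1 / δ)))
    (hε_int : MeasureTheory.IntegrableOn (fun t => ε t / t) (Ici (1 / δ)))
    (φ : ℝ → ℝ)
    (hφ_def : ∀ x ∈ Ioc 0 δ, φ x = x / ε (1 / x))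
    (hφ_mono : StrictMonoOn φ (Ioc 0 δ))
    (hφ_cont : ContinuousOn φ (Ioc 0 δ))
    (hφ_surj : φ '' (Ioc 0 δ) = Ioc 0 c)
    (hφ_lim : Filter.Tendsto φ (nhdsWithin 0 (Ioi 0)) (nhds 0))
    (ψ : ℝ → ℝ)
    (hψ : ∀ x ∈ Ioc 0 δ, ψ (φ x) = x)
    (hψ' : ∀ y ∈ Ioc 0 c, φ (ψ y) = y) :
    MeasureTheory.IntegrableOn (fun x : ℝ => ψ (1 / x)) (Ici (1 : ℝ)) :=
  stmt_9_general δ c hδ hc ε hε_int φ hφ_def hφ_mono hφ_surj ψ hψ hψ'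
end

section
/- There is no function B₀ : Ω₀ → ℝ, where Ω₀ = {(u,v,A) : u ≥ 0, v ≥ 0, 0 ≤ A ≤ 1, uv ≤ 1}, that is concave on Ω₀ (in the sense of the midpoint Taylor inequality along admissible dyadic dynamics), satisfies 0 ≤ B₀(u,v,A) ≤ u everywhere, and satisfies the drift inequality B₀(u,v,A) − (B₀(u₊,v₊,A₊)+B₀(u₋,v₋,A₋))/2 ≥ c·α·u²v (for some fixed c > 0) whenever u = (u₊+u₋)/2, v = (v₊+v₋)/2, A = (A₊+A₋)/2 + α with α ∈ [0,1] and all six points lie in Ω₀. -/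
/-!
Along the line `uv = 1`, `A = 1` the point `(t, 1/t, 1)` is the midpoint of `(2t, 1/(2t), 1)` and
`(0, 3/(2t), 0)` with `α = 1/2`. Since `B₀ ≥ 0`, the drift inequality for this splitting gives
`B₀(2t, 1/(2t), 1)/(2t) + c/2 ≤ B₀(t, 1/t, 1)/t`, so along `t = 2ⁿ` the nonnegative quantities
`B₀(t, 1/t, 1)/t` decrease by `c/2` at every step, which is impossible.
-/

/-- The domain `Ω₀ = {(u,v,A) : u ≥ 0, v ≥ 0, 0 ≤ A ≤ 1, uv ≤ 1}`. -/
def Omega0 (u v A : ℝ) : Prop := 0 ≤ u ∧ 0 ≤ v ∧ 0 ≤ A ∧ A ≤ 1 ∧ u * v ≤ 1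

theorem Real.not_bddBelow_range_of_add_le {g : ℕ → ℝ} {δ : ℝ} (hδ : 0 < δ)
    (h : ∀ n, g (n + 1) + δ ≤ g n) : ¬ BddBelow (Set.range g) := by
  have telescope : ∀ n : ℕ, g n + n * δ ≤ g 0 := by
    intro n
    induction n with
    | zero => simp
    | succ n ih => push_cast; linarith [h n]
  rintro ⟨m, hm⟩
  obtain ⟨n, hn⟩ := exists_nat_gt ((g 0 - m) / δ)
  have hgn : m ≤ g n := hm ⟨n, rfl⟩
  have : g 0 - m < n * δ := (div_lt_iff₀ hδ).mp hn
  linarith [telescope n]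

theorem omega0_self_inv_one {t : ℝ} (ht : 0 < t) : Omega0 t t⁻¹ 1 :=
  ⟨ht.le, inv_nonneg.mpr ht.le, zero_le_one, le_rfl, (mul_inv_cancel₀ ht.ne').le⟩

theorem omega0_zero_zero {v : ℝ} (hv : 0 ≤ v) : Omega0 0 v 0 :=
  ⟨le_rfl, hv, le_rfl, zero_le_one, by simp⟩

theorem div_add_half_le_of_drift {B : ℝ → ℝ → ℝ → ℝ} {c : ℝ}
    (hnonneg : ∀ u v A, Omega0 u v A → 0 ≤ B u v A)
    (hdrift : ∀ u v A up vp Ap um vm Am α : ℝ,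
      Omega0 u v A → Omega0 up vp Ap → Omega0 um vm Am →
      0 ≤ α → α ≤ 1 →
      u = (up + um) / 2 → v = (vp + vm) / 2 → A = (Ap + Am) / 2 + α →
      c * α * u ^ 2 * v ≤ B u v A - (B up vp Ap + B um vm Am) / 2)
    {t : ℝ} (ht : 0 < t) :
    B (2 * t) (2 * t)⁻¹ 1 / (2 * t) + c / 2 ≤ B t t⁻¹ 1 / t := by
  have h3 : 0 ≤ 3 * (2 * t)⁻¹ := by positivity
  have split := hdrift t t⁻¹ 1 (2 * t) (2 * t)⁻¹ 1 0 (3 * (2 * t)⁻¹) 0 (1 / 2)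
    (omega0_self_inv_one ht) (omega0_self_inv_one (by positivity)) (omega0_zero_zero h3)
    (by norm_num) (by norm_num) (by ring) (by field_simp; ring) (by norm_num)
  have hdrift_val : c * (1 / 2) * t ^ 2 * t⁻¹ = c / 2 * t := by field_simp
  have hB0 := hnonneg 0 (3 * (2 * t)⁻¹) 0 (omega0_zero_zero h3)
  rw [div_add' _ _ _ (by positivity), div_le_div_iff₀ (by positivity) ht]
  nlinarith

/-- there is no function `B₀` on `Ω₀` with `0 ≤ B₀(u,v,A) ≤ u`
satisfying, for some fixed `c > 0`, the concavity/drift inequality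
`B₀(u,v,A) − (B₀(up,vp,Ap)+B₀(um,vm,Am))/2 ≥ c α u² v` along all admissible
dyadic dynamics `u = (up+um)/2`, `v = (vp+vm)/2`, `A = (Ap+Am)/2 + α`,
`α ∈ [0,1]`, with all points in `Ω₀`. -/
theorem stmt_14 :
    ¬ ∃ (B₀ : ℝ → ℝ → ℝ → ℝ) (c : ℝ), 0 < c
      ∧ (∀ u v A, Omega0 u v A → 0 ≤ B₀ u v A ∧ B₀ u v A ≤ u)
      ∧ (∀ u v A up vp Ap um vm Am α : ℝ,
          Omega0 u v A → Omega0 up vp Ap → Omega0 um vm Am →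
          0 ≤ α → α ≤ 1 →
          u = (up + um) / 2 → v = (vp + vm) / 2 → A = (Ap + Am) / 2 + α →
          c * α * u ^ 2 * v ≤ B₀ u v A - (B₀ up vp Ap + B₀ um vm Am) / 2) := by
  rintro ⟨B, c, hc, hrange, hdrift⟩
  have hnonneg : ∀ u v A, Omega0 u v A → 0 ≤ B u v A := fun u v A h => (hrange u v A h).1
  refine Real.not_bddBelow_range_of_add_le (g := fun n => B (2 ^ n) (2 ^ n)⁻¹ 1 / 2 ^ n)
    (half_pos hc) (fun n => ?_) ⟨0, ?_⟩
  · simpa only [pow_succ'] using div_add_half_le_of_drift hnonneg hdrift (pow_pos two_pos n)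
  · rintro _ ⟨n, rfl⟩
    exact div_nonneg (hnonneg _ _ _ (omega0_self_inv_one (by positivity))) (by positivity)
end

section
/- Let ε : [1,∞) → (0,∞) be decreasing with t ↦ t·ε(t) increasing and concave, and ∫₁^∞ ε(t)/t dt < ∞, and let Ψ, Ψ₀ satisfy Ψ₀(s) ≤ C·Ψ(s)·ε(Ψ(s)). Let N : (0,∞) → [0,1] be decreasing with ∫₀^∞ N(t) dt = u < ∞. Then by Cauchy–Schwarz and Jensen applied to the probability measure dμ = N(t)dt/u, one has ∫₀^∞ N(t)/Ψ₀(N(t)) dt ≥ u² / (C·W·ε(W/u)), where W = ∫₀^∞ N(t)Ψ(N(t)) dt. -/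
/-!
Cauchy–Schwarz is applied to the pair `N / Ψ₀(N)` and `C N a(Ψ(N))`, where `a(t) = t ε(t)`:
their product dominates `N²` because `Ψ₀ ≤ C a(Ψ)`. Jensen's inequality for the concave `a`
against the probability measure `N dt / u` then gives `∫ N a(Ψ(N)) ≤ u a(W / u) = W ε(W / u)`.
Jensen needs `a` continuous on `[1, ∞)`, including the endpoint; this comes from `ε` decreasing
and `a` increasing, which squeeze `a(t)` between `a(x)` and `(t / x) a(x)`.
-/

open Set MeasureTheory Filter Topology

theorem continuousOn_id_mul_of_antitoneOn {f : ℝ → ℝ} {s : Set ℝ} (hs : s ⊆ Ioi 0)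
    (hf : AntitoneOn f s) (hmono : MonotoneOn (fun t => t * f t) s) :
    ContinuousOn (fun t => t * f t) s := by
  intro x hx
  have hx0 : 0 < x := hs hx
  have hlin : ∀ t, t * f x = t / x * (x * f x) := fun t => by field_simp
  have lower : ∀ t ∈ s, min (x * f x) (t / x * (x * f x)) ≤ t * f t := fun t ht => by
    rcases le_total t x with h | h
    · rw [← hlin]
      exact (min_le_right _ _).trans (mul_le_mul_of_nonneg_left (hf ht hx h) (hs ht).le)
    · exact (min_le_left _ _).trans (hmono hx ht h)
  have upper : ∀ t ∈ s, t * f t ≤ max (x * f x) (t / x * (x * f x)) := fun t ht => by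
    rcases le_total t x with h | h
    · exact (hmono ht hx h).trans (le_max_left _ _)
    · rw [← hlin]
      exact (mul_le_mul_of_nonneg_left (hf hx ht h) (hs ht).le).trans (le_max_right _ _)
  have hlin_lim : Tendsto (fun t => t / x * (x * f x)) (𝓝[s] x) (𝓝 (x * f x)) := by
    have := ((continuous_id.div_const x).mul_const (x * f x)).continuousWithinAt (s := s) (x := x)
    simpa [ContinuousWithinAt, hx0.ne'] using this
  have hmin := (tendsto_const_nhds (x := x * f x)).min hlin_lim
  have hmax := (tendsto_const_nhds (x := x * f x)).max hlin_lim
  rw [min_self] at hmin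
  rw [max_self] at hmax
  exact tendsto_of_tendsto_of_tendsto_of_le_of_le' hmin hmax
    (eventually_nhdsWithin_of_forall lower) (eventually_nhdsWithin_of_forall upper)

section Weighted

variable {α : Type*} [MeasurableSpace α] {μ : Measure α} {w : α → ℝ}

theorem sq_integral_le_integral_mul_integral {f g h : α → ℝ} (hf : 0 ≤ᵐ[μ] f) (hg : 0 ≤ᵐ[μ] g)
    (hhfg : ∀ᵐ x ∂μ, h x ^ 2 ≤ f x * g x) (hfi : Integrable f μ) (hgi : Integrable g μ)
    (hhi : Integrable h μ) :
    (∫ x, h x ∂μ) ^ 2 ≤ (∫ x, f x ∂μ) * ∫ x, g x ∂μ := by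
  have hquad : ∀ c : ℝ, 0 ≤ (∫ x, f x ∂μ) * (c * c) + (-2 * ∫ x, h x ∂μ) * c + ∫ x, g x ∂μ := by
    intro c
    have hpt : ∀ᵐ x ∂μ, 0 ≤ f x * (c * c) + (-2 * h x) * c + g x := by
      filter_upwards [hf, hg, hhfg] with x (hfx : 0 ≤ f x) (hgx : 0 ≤ g x) hx
      rcases hfx.eq_or_lt with hf0 | hf0
      · have hh : h x = 0 := pow_eq_zero_iff two_ne_zero |>.1
          (le_antisymm (by simpa [← hf0] using hx) (sq_nonneg _))
        simp [← hf0, hh, hgx]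
      · nlinarith [sq_nonneg (c * f x - h x)]
    have := integral_nonneg_of_ae hpt
    rwa [integral_add, integral_add, integral_mul_const, integral_mul_const,
      integral_const_mul] at this
    exacts [hfi.mul_const _, (hhi.const_mul _).mul_const _,
      (hfi.mul_const _).add ((hhi.const_mul _).mul_const _), hgi]
  have := discrim_le_zero hquad
  rw [discrim] at this
  nlinarith

theorem AEMeasurable.mul_comp_of_mul {F : α → ℝ} {φ : ℝ → ℝ} (hφ : Measurable φ)
    (hw : AEMeasurable w μ) (hwF : AEMeasurable (fun x => w x * F x) μ) :
    AEMeasurable (fun x => w x * φ (F x)) μ := by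
  -- `F` itself need not be measurable: off `{w = 0}` it equals `(w * F) / w`.
  convert hw.mul (hφ.comp_aemeasurable (hwF.div hw)) using 2 with x
  rcases eq_or_ne (w x) 0 with h | h
  · simp [h]
  · simp [mul_div_cancel_left₀ _ h]

theorem MeasureTheory.Integrable.mul_mul_comp_of_antitoneOn {F : α → ℝ} {ε : ℝ → ℝ}
    (hε : AntitoneOn ε (Ici 1)) (hε0 : ∀ t, 1 ≤ t → 0 ≤ ε t) (hw : AEMeasurable w μ)
    (hwF : Integrable (fun x => w x * F x) μ) (hF : ∀ᵐ x ∂μ, w x ≠ 0 → 1 ≤ F x) :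
    Integrable (fun x => w x * (F x * ε (F x))) μ := by
  have hext : Antitone fun z => ε (max z 1) := fun y z hyz =>
    hε (mem_Ici.2 (le_max_right _ _)) (mem_Ici.2 (le_max_right _ _)) (max_le_max hyz le_rfl)
  have hmeas : AEMeasurable (fun x => w x * (F x * ε (max (F x) 1))) μ :=
    hw.mul_comp_of_mul (measurable_id.mul hext.measurable) hwF.aemeasurable
  refine (hwF.norm.const_mul (ε 1)).mono' (hmeas.congr ?_).aestronglyMeasurable ?_
  · filter_upwards [hF] with x hx
    rcases eq_or_ne (w x) 0 with h | h
    · simp [h]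
    · rw [max_eq_left (hx h)]
  · filter_upwards [hF] with x hx
    rcases eq_or_ne (w x) 0 with h | h
    · simp [h]
    · have h1 := hx h
      rw [← mul_assoc, norm_mul, Real.norm_of_nonneg (hε0 _ h1), mul_comm]
      exact mul_le_mul_of_nonneg_right (hε self_mem_Ici h1 h1) (norm_nonneg _)

theorem ConcaveOn.integral_mul_comp_le {s : Set ℝ} {g : ℝ → ℝ} (hg : ConcaveOn ℝ s g)
    (hgc : ContinuousOn g s) (hsc : IsClosed s) {f : α → ℝ} (hw : 0 ≤ᵐ[μ] w)
    (hwi : Integrable w μ) (hw0 : 0 < ∫ x, w x ∂μ) (hfs : ∀ᵐ x ∂μ, w x ≠ 0 → f x ∈ s)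
    (hfi : Integrable (fun x => w x * f x) μ) (hgi : Integrable (fun x => w x * g (f x)) μ) :
    ∫ x, w x * g (f x) ∂μ ≤ (∫ x, w x ∂μ) * g ((∫ x, w x * f x ∂μ) / ∫ x, w x ∂μ) := by
  set ρ : α → NNReal := fun x => (w x).toNNReal
  have hρ : AEMeasurable ρ μ := hwi.aemeasurable.real_toNNReal
  have hsmul : ∀ F : α → ℝ, (fun x => ρ x • F x) =ᵐ[μ] fun x => w x * F x := fun F => by
    filter_upwards [hw] with x hx
    simp [ρ, NNReal.smul_def, Real.coe_toNNReal _ hx]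
  set ν := μ.withDensity fun x => ρ x
  have hν : ν univ = ENNReal.ofReal (∫ x, w x ∂μ) := by
    rw [withDensity_apply _ MeasurableSet.univ, Measure.restrict_univ,
      ofReal_integral_eq_lintegral_ofReal hwi hw]
    rfl
  have : IsFiniteMeasure ν := ⟨by simp [hν]⟩
  have : NeZero ν := ⟨fun h => by simp [h] at hν; linarith⟩
  have hfs' : ∀ᵐ x ∂ν, f x ∈ s := by
    refine (ae_withDensity_iff' hρ.coe_nnreal_ennreal).2 ?_
    filter_upwards [hfs] with x hx hρx
    exact hx fun h => hρx (by simp [ρ, h])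
  have key := hg.le_map_average hgc hsc hfs'
    ((integrable_withDensity_iff_integrable_smul₀ hρ).2 (hfi.congr (hsmul f).symm))
    ((integrable_withDensity_iff_integrable_smul₀ hρ).2 (hgi.congr (hsmul (g ∘ f)).symm))
  rw [average_eq, average_eq, measureReal_def, hν, ENNReal.toReal_ofReal hw0.le,
    integral_withDensity_eq_integral_smul₀ hρ, integral_withDensity_eq_integral_smul₀ hρ,
    integral_congr_ae (hsmul f), integral_congr_ae (hsmul fun x => g (f x)), smul_eq_mul,
    smul_eq_mul, inv_mul_eq_div, inv_mul_eq_div, div_le_iff₀ hw0] at key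
  linarith

theorem sq_integral_le_const_mul_integral_div_mul_integral_mul {G H : α → ℝ} {c : ℝ}
    (hw : 0 ≤ᵐ[μ] w) (hG : ∀ᵐ x ∂μ, w x ≠ 0 → 0 < G x)
    (hGH : ∀ᵐ x ∂μ, w x ≠ 0 → G x ≤ c * H x) (hwi : Integrable w μ)
    (hwGi : Integrable (fun x => w x / G x) μ) (hwHi : Integrable (fun x => w x * H x) μ) :
    (∫ x, w x ∂μ) ^ 2 ≤ c * (∫ x, w x / G x ∂μ) * ∫ x, w x * H x ∂μ := by
  have hpt : ∀ᵐ x ∂μ, 0 ≤ w x / G x ∧ 0 ≤ c * (w x * H x) ∧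
      w x ^ 2 ≤ w x / G x * (c * (w x * H x)) := by
    filter_upwards [hw, hG, hGH] with x (hwx : 0 ≤ w x) hGx hGHx
    rcases eq_or_ne (w x) 0 with h0 | h0
    · simp [h0]
    · have hGx := hGx h0
      have hcH : 0 < c * H x := hGx.trans_le (hGHx h0)
      refine ⟨div_nonneg hwx hGx.le, by nlinarith, ?_⟩
      rw [div_mul_eq_mul_div, le_div_iff₀ hGx]
      nlinarith [mul_le_mul_of_nonneg_left (hGHx h0) (sq_nonneg (w x))]
  have := sq_integral_le_integral_mul_integral (hpt.mono fun _ h => h.1)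
    (hpt.mono fun _ h => h.2.1) (hpt.mono fun _ h => h.2.2) hwGi (hwHi.const_mul c) hwi
  rwa [integral_const_mul, mul_left_comm, ← mul_assoc] at this

theorem integral_le_integral_mul_of_one_le {F : α → ℝ} (hw : 0 ≤ᵐ[μ] w)
    (hF : ∀ᵐ x ∂μ, w x ≠ 0 → 1 ≤ F x) (hwi : Integrable w μ)
    (hwFi : Integrable (fun x => w x * F x) μ) :
    ∫ x, w x ∂μ ≤ ∫ x, w x * F x ∂μ := by
  refine integral_mono_ae hwi hwFi ?_
  filter_upwards [hw, hF] with x (hwx : 0 ≤ w x) hFx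
  rcases eq_or_ne (w x) 0 with h0 | h0
  · simp [h0]
  · exact le_mul_of_one_le_right hwx (hFx h0)

theorem integral_mul_mul_comp_le_of_concaveOn {ε : ℝ → ℝ} (hε0 : ∀ t, 1 ≤ t → 0 ≤ ε t)
    (hε : AntitoneOn ε (Ici 1)) (hmono : MonotoneOn (fun t => t * ε t) (Ici 1))
    (hconc : ConcaveOn ℝ (Ici 1) (fun t => t * ε t)) {F : α → ℝ} (hw : 0 ≤ᵐ[μ] w)
    (hwi : Integrable w μ) (hw0 : 0 < ∫ x, w x ∂μ) (hwF : Integrable (fun x => w x * F x) μ)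
    (hF : ∀ᵐ x ∂μ, w x ≠ 0 → 1 ≤ F x) :
    ∫ x, w x * (F x * ε (F x)) ∂μ ≤
      (∫ x, w x * F x ∂μ) * ε ((∫ x, w x * F x ∂μ) / ∫ x, w x ∂μ) := by
  have := hconc.integral_mul_comp_le
    (continuousOn_id_mul_of_antitoneOn (fun t ht => mem_Ioi.2 (zero_lt_one.trans_le ht)) hε hmono)
    isClosed_Ici hw hwi hw0 hF hwF (hwF.mul_mul_comp_of_antitoneOn hε hε0 hwi.aemeasurable hF)
  rwa [← mul_assoc, mul_div_cancel₀ _ hw0.ne'] at this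

end Weighted

theorem stmt_19_general (ε : ℝ → ℝ)
    (hε_pos : ∀ t, 1 ≤ t → 0 < ε t)
    (hε_dec : AntitoneOn ε (Ici (1 : ℝ)))
    (ha_inc : MonotoneOn (fun t => t * ε t) (Ici (1 : ℝ)))
    (ha_conc : ConcaveOn ℝ (Ici (1 : ℝ)) (fun t => t * ε t))
    (C : ℝ) (hC : 0 < C)
    (Ψ Ψ₀ : ℝ → ℝ)
    (hΨ_ge : ∀ s ∈ Ioc (0 : ℝ) 1, 1 ≤ Ψ s)
    (hΨ₀_pos : ∀ s ∈ Ioc (0 : ℝ) 1, 0 < Ψ₀ s)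
    (hΨ₀_le : ∀ s ∈ Ioc (0 : ℝ) 1, Ψ₀ s ≤ C * Ψ s * ε (Ψ s))
    (N : ℝ → ℝ)
    (hN_mem : ∀ t ∈ Ioi (0 : ℝ), N t ∈ Icc (0 : ℝ) 1)
    (hN_int : IntegrableOn N (Ioi (0 : ℝ)))
    (hNΨ_int : IntegrableOn (fun t => N t * Ψ (N t)) (Ioi (0 : ℝ)))
    (hNΨ₀_int : IntegrableOn (fun t => N t / Ψ₀ (N t)) (Ioi (0 : ℝ)))
    (u W : ℝ)
    (hu : u = ∫ t in Ioi (0 : ℝ), N t) (hu_pos : 0 < u)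
    (hW : W = ∫ t in Ioi (0 : ℝ), N t * Ψ (N t)) :
    u ^ 2 / (C * W * ε (W / u)) ≤ ∫ t in Ioi (0 : ℝ), N t / Ψ₀ (N t) := by
  have hN_nonneg : 0 ≤ᵐ[volume.restrict (Ioi 0)] N :=
    ae_restrict_of_forall_mem measurableSet_Ioi fun t ht => (hN_mem t ht).1
  have hN_supp : ∀ᵐ t ∂volume.restrict (Ioi 0), N t ≠ 0 → N t ∈ Ioc 0 1 :=
    ae_restrict_of_forall_mem measurableSet_Ioi fun t ht h0 =>
      ⟨(hN_mem t ht).1.lt_of_ne' h0, (hN_mem t ht).2⟩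
  have hΨN_ge : ∀ᵐ t ∂volume.restrict (Ioi 0), N t ≠ 0 → 1 ≤ Ψ (N t) :=
    hN_supp.mono fun t ht h0 => hΨ_ge _ (ht h0)
  have huW : u ≤ W := hu ▸ hW ▸ integral_le_integral_mul_of_one_le hN_nonneg hΨN_ge hN_int hNΨ_int
  have hjensen := integral_mul_mul_comp_le_of_concaveOn (fun t ht => (hε_pos t ht).le) hε_dec
    ha_inc ha_conc hN_nonneg hN_int (hu ▸ hu_pos) hNΨ_int hΨN_ge
  have hCS := sq_integral_le_const_mul_integral_div_mul_integral_mul hN_nonneg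
    (hN_supp.mono fun t ht h0 => hΨ₀_pos _ (ht h0))
    (hN_supp.mono fun t ht h0 => (hΨ₀_le _ (ht h0)).trans_eq (mul_assoc _ _ _))
    hN_int hNΨ₀_int (hNΨ_int.mul_mul_comp_of_antitoneOn hε_dec (fun t ht => (hε_pos t ht).le)
      hN_int.aemeasurable hΨN_ge)
  rw [← hu, ← hW] at hjensen
  rw [← hu] at hCS
  have hI_nonneg : 0 ≤ ∫ t in Ioi 0, N t / Ψ₀ (N t) :=
    setIntegral_nonneg measurableSet_Ioi fun t ht => (hN_mem t ht).1.eq_or_lt.elim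
      (fun h0 => by simp [← h0]) fun h0 => div_nonneg h0.le (hΨ₀_pos _ ⟨h0, (hN_mem t ht).2⟩).le
  have hD : 0 < C * W * ε (W / u) :=
    mul_pos (mul_pos hC (hu_pos.trans_le huW)) (hε_pos _ ((one_le_div hu_pos).2 huW))
  rw [div_le_iff₀ hD]
  linarith [mul_le_mul_of_nonneg_left hjensen (mul_nonneg hC.le hI_nonneg)]

/-- Cauchy–Schwarz plus Jensen step.  Let `ε : [1,∞) → (0,∞)` be
decreasing with `t ↦ tε(t)` increasing and concave and `∫₁^∞ ε(t)/t dt < ∞`; let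
`Ψ, Ψ₀` (decreasing, positive on `(0,1]`, `Ψ ≥ 1`) satisfy `Ψ₀(s) ≤ C Ψ(s) ε(Ψ(s))`.
If `N : (0,∞) → [0,1]` is decreasing with `u = ∫₀^∞ N dt < ∞` (all integrals finite),
then `∫₀^∞ N/Ψ₀(N) dt ≥ u² / (C · W · ε(W/u))` where `W = ∫₀^∞ N Ψ(N) dt`. -/
theorem stmt_19 (ε : ℝ → ℝ)
    (hε_pos : ∀ t, 1 ≤ t → 0 < ε t)
    (hε_dec : AntitoneOn ε (Ici (1 : ℝ)))
    (ha_inc : MonotoneOn (fun t => t * ε t) (Ici (1 : ℝ)))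
    (ha_conc : ConcaveOn ℝ (Ici (1 : ℝ)) (fun t => t * ε t))
    (hε_int : IntegrableOn (fun t => ε t / t) (Ici (1 : ℝ)))
    (C : ℝ) (hC : 0 < C)
    (Ψ Ψ₀ : ℝ → ℝ)
    (hΨ_dec : AntitoneOn Ψ (Ioc (0 : ℝ) 1))
    (hΨ_ge : ∀ s ∈ Ioc (0 : ℝ) 1, 1 ≤ Ψ s)
    (hΨ₀_pos : ∀ s ∈ Ioc (0 : ℝ) 1, 0 < Ψ₀ s)
    (hΨ₀_le : ∀ s ∈ Ioc (0 : ℝ) 1, Ψ₀ s ≤ C * Ψ s * ε (Ψ s))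
    (N : ℝ → ℝ)
    (hN_mem : ∀ t ∈ Ioi (0 : ℝ), N t ∈ Icc (0 : ℝ) 1)
    (hN_dec : AntitoneOn N (Ioi (0 : ℝ)))
    (hN_int : IntegrableOn N (Ioi (0 : ℝ)))
    (hNΨ_int : IntegrableOn (fun t => N t * Ψ (N t)) (Ioi (0 : ℝ)))
    (hNΨ₀_int : IntegrableOn (fun t => N t / Ψ₀ (N t)) (Ioi (0 : ℝ)))
    (u W : ℝ)
    (hu : u = ∫ t in Ioi (0 : ℝ), N t) (hu_pos : 0 < u)
    (hW : W = ∫ t in Ioi (0 : ℝ), N t * Ψ (N t)) :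
    u ^ 2 / (C * W * ε (W / u)) ≤ ∫ t in Ioi (0 : ℝ), N t / Ψ₀ (N t) :=
  stmt_19_general ε hε_pos hε_dec ha_inc ha_conc C hC Ψ Ψ₀ hΨ_ge hΨ₀_pos hΨ₀_le N hN_mem hN_int
    hNΨ_int hNΨ₀_int u W hu hu_pos hW
end
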